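/- Let β be a Pisot number with finite Rényi expansion d_β(1) = t₁⋯t_ℓ and α a conjugate of β. If x ∈ (0,1) has a finite β-expansion 0•x₋₁⋯x₋ₚ, then the conjugate -x' has an eventually periodic α-adic representation over Z of the form ^ω(t₁⋯t_{ℓ-1}(t_ℓ-1)) u_n⋯u_0 • u_{-1}⋯u_{-m}, i.e., -x' = P·α^{N}/(1-α^{ℓ}) + Σ_{i=-m}^{n} u_i α^i where P = Σ_{j=1}^{ℓ} t'_j α^{ℓ-j} with t'_ℓ = t_ℓ - 1, for suitable integers N, n, m and integer digits u_i. Equivalently, -x' differs from the α-value of ^ω(t₁⋯t_{ℓ-1}(t_ℓ-1))·α^{N} by an element of Z[α, α^{-1}]. -/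

import Mathlib

/-!
Since d_β(1) = t₁⋯t_ℓ is finite, β is a root of the integer polynomial
X^ℓ - Σ t_{n+1} X^{ℓ-1-n}, hence so is its conjugate α. This relation says both that
Σ_{n<ℓ} t_{n+1} α^{-(n+1)} = 1 and that one period of ^ω(t₁⋯t_{ℓ-1}(t_ℓ-1)) has α-value α^ℓ - 1;
as |α| < 1, the left-infinite periodic word therefore has α-value -1. Hence
-x' = -1 + (Σ t_{n+1} α^{-(n+1)} - Σ x_{-(n+1)} α^{-(n+1)}): the periodic integer part followed by
the finitely many fractional digits t_{n+1} - x_{-(n+1)}.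
-/

noncomputable def betaMap (β : ℝ) : ℝ → ℝ := fun x => Int.fract (β * x)

/-- `renyi β n` is the digit t_{n+1} of d_β(1) = t₁t₂⋯. -/
noncomputable def renyi (β : ℝ) (n : ℕ) : ℤ := ⌊β * (betaMap β)^[n] 1⌋

def IsPisot (β : ℝ) : Prop :=
  1 < β ∧ IsIntegral ℤ β ∧
    ∀ z : ℂ, Polynomial.aeval z (minpoly ℤ β) = 0 → z ≠ (β : ℂ) → ‖z‖ < 1

/-- The digits of the purely periodic left-infinite word ^ω(t₁⋯t_{ℓ-1}(t_ℓ-1)),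
position 0 carrying the rightmost letter of the period. -/
noncomputable def periodDigit (β : ℝ) (ℓ : ℕ) (n : ℕ) : ℤ :=
  renyi β (ℓ - 1 - n % ℓ) - if n % ℓ = 0 then 1 else 0

open Finset Polynomial

lemma betaMap_iterate_eq (β x : ℝ) (m : ℕ) :
    (betaMap β)^[m] x =
      β ^ m * x - ∑ n ∈ range m, (⌊β * (betaMap β)^[n] x⌋ : ℝ) * β ^ (m - 1 - n) := by
  induction m with
  | zero => simp
  | succ m ih =>
    have hshift : ∀ n ∈ range m, β * ((⌊β * (betaMap β)^[n] x⌋ : ℝ) * β ^ (m - 1 - n)) =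
        (⌊β * (betaMap β)^[n] x⌋ : ℝ) * β ^ (m - n) := by
      intro n hn
      rw [show m - n = m - 1 - n + 1 by have := mem_range.mp hn; omega, pow_succ]
      ring
    rw [Function.iterate_succ_apply', betaMap, ← Int.self_sub_floor, sum_range_succ,
      Nat.add_sub_cancel, Nat.sub_self, pow_zero, mul_one]
    conv_lhs => arg 1; rw [ih, mul_sub, mul_sum, sum_congr rfl hshift]
    ring

lemma eq_zero_of_floor_betaMap_iterate_eq_zero {β y : ℝ} (hβ : 1 < β) (hy : 0 ≤ y)
    (hdigits : ∀ j, ⌊β * (betaMap β)^[j] y⌋ = 0) : y = 0 := by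
  have horbit : ∀ j, (betaMap β)^[j] y = β ^ j * y := fun j => by
    simp only [betaMap_iterate_eq β y j, hdigits, Int.cast_zero, zero_mul, sum_const_zero,
      sub_zero]
  by_contra hy0
  have hypos : 0 < y := lt_of_le_of_ne hy (Ne.symm hy0)
  obtain ⟨j, hj⟩ := pow_unbounded_of_one_lt y⁻¹ hβ
  have hlt : β * (β ^ j * y) < 1 := by
    simpa [horbit] using (Int.floor_eq_zero_iff.mp (hdigits j)).2
  have hgt : 1 < β ^ j * y := (inv_lt_iff_one_lt_mul₀ hypos).mp hj
  nlinarith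

lemma betaMap_iterate_one_eq_zero {β : ℝ} {ℓ : ℕ} (hβ : 1 < β) (hℓ : 0 < ℓ)
    (hfin : ∀ n, ℓ ≤ n → renyi β n = 0) : (betaMap β)^[ℓ] 1 = 0 := by
  refine eq_zero_of_floor_betaMap_iterate_eq_zero hβ ?_ fun j => ?_
  · obtain ⟨m, rfl⟩ := Nat.exists_eq_add_one_of_ne_zero hℓ.ne'
    rw [Function.iterate_succ_apply']
    exact Int.fract_nonneg _
  · rw [← Function.iterate_add_apply]
    exact hfin (j + ℓ) (Nat.le_add_left ℓ j)

lemma pow_eq_sum_renyi {β : ℝ} {ℓ : ℕ} (hβ : 1 < β) (hℓ : 0 < ℓ)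
    (hfin : ∀ n, ℓ ≤ n → renyi β n = 0) :
    β ^ ℓ = ∑ n ∈ range ℓ, (renyi β n : ℝ) * β ^ (ℓ - 1 - n) := by
  have h := betaMap_iterate_eq β 1 ℓ
  rw [betaMap_iterate_one_eq_zero hβ hℓ hfin, mul_one] at h
  exact sub_eq_zero.mp h.symm

noncomputable def renyiPoly (β : ℝ) (ℓ : ℕ) : ℤ[X] :=
  X ^ ℓ - ∑ n ∈ range ℓ, C (renyi β n) * X ^ (ℓ - 1 - n)

lemma aeval_renyiPoly {A : Type*} [CommRing A] (β : ℝ) (ℓ : ℕ) (z : A) :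
    aeval z (renyiPoly β ℓ) = z ^ ℓ - ∑ n ∈ range ℓ, (renyi β n : A) * z ^ (ℓ - 1 - n) := by
  simp [renyiPoly]

lemma aeval_eq_zero_of_aeval_minpoly_eq_zero {R S T : Type*} [CommRing R] [IsDomain R]
    [IsIntegrallyClosed R] [CommRing S] [IsDomain S] [Algebra R S] [Module.IsTorsionFree R S]
    [CommRing T] [Algebra R T] {s : S} (hs : IsIntegral R s) {t : T}
    (ht : aeval t (minpoly R s) = 0) {q : R[X]} (hq : aeval s q = 0) : aeval t q = 0 := by
  obtain ⟨r, rfl⟩ := minpoly.isIntegrallyClosed_dvd hs hq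
  rw [map_mul, ht, zero_mul]

lemma sum_mul_zpow_neg_succ_eq_one {K : Type*} [Field K] {z : K} (hz : z ≠ 0) {ℓ : ℕ}
    (a : ℕ → K) (h : z ^ ℓ = ∑ n ∈ range ℓ, a n * z ^ (ℓ - 1 - n)) :
    ∑ n ∈ range ℓ, a n * z ^ (-(n + 1 : ℤ)) = 1 := by
  have hterm : ∀ n ∈ range ℓ, a n * z ^ (-(n + 1 : ℤ)) = a n * z ^ (ℓ - 1 - n) * (z ^ ℓ)⁻¹ := by
    intro n hn
    rw [mul_assoc, ← zpow_natCast, ← zpow_natCast, ← zpow_neg, ← zpow_add₀ hz]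
    congr 2
    have := mem_range.mp hn
    omega
  rw [sum_congr rfl hterm, ← sum_mul, ← h, mul_inv_cancel₀ (pow_ne_zero _ hz)]

lemma periodDigit_periodic (β : ℝ) (ℓ : ℕ) : Function.Periodic (periodDigit β ℓ) ℓ := by
  intro n
  simp only [periodDigit, Nat.add_mod_right]

lemma sum_range_periodDigit_mul_pow {A : Type*} [CommRing A] {β : ℝ} {ℓ : ℕ} (hℓ : 0 < ℓ)
    {z : A} (h : z ^ ℓ = ∑ n ∈ range ℓ, (renyi β n : A) * z ^ (ℓ - 1 - n)) :
    ∑ j ∈ range ℓ, (periodDigit β ℓ j : A) * z ^ j = z ^ ℓ - 1 := by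
  have hdigit : ∀ j ∈ range ℓ, (periodDigit β ℓ j : A) * z ^ j =
      (renyi β (ℓ - 1 - j) : A) * z ^ (ℓ - 1 - (ℓ - 1 - j)) - if j = 0 then 1 else 0 := by
    intro j hj
    have hj' := mem_range.mp hj
    rw [periodDigit, Nat.mod_eq_of_lt hj', Nat.sub_sub_self (Nat.le_sub_one_of_lt hj')]
    split_ifs with hj0 <;> simp [hj0]
  rw [sum_congr rfl hdigit, sum_sub_distrib, sum_range_reflect (fun n => (renyi β n : A) *
    z ^ (ℓ - 1 - n)), ← h, sum_ite_eq' (range ℓ) 0, if_pos (mem_range.mpr hℓ)]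

lemma pow_ne_one_of_norm_lt_one {𝕜 : Type*} [NormedDivisionRing 𝕜] {z : 𝕜} (hz : ‖z‖ < 1)
    {ℓ : ℕ} (hℓ : ℓ ≠ 0) : z ^ ℓ ≠ 1 := fun h => by
  simpa [← norm_pow, h] using pow_lt_one₀ (norm_nonneg z) hz hℓ

lemma hasSum_periodic_mul_pow {𝕜 : Type*} [NormedField 𝕜] [CompleteSpace 𝕜] {f : ℕ → 𝕜}
    {ℓ : ℕ} (hf : Function.Periodic f ℓ) (hℓ : 0 < ℓ) {z : 𝕜} (hz : ‖z‖ < 1) :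
    HasSum (fun n => f n * z ^ n) ((∑ j ∈ range ℓ, f j * z ^ j) / (1 - z ^ ℓ)) := by
  have hbound : ∀ n, ‖f n‖ ≤ ∑ j ∈ range ℓ, ‖f j‖ := fun n => by
    rw [← hf.map_mod_nat n]
    exact single_le_sum (fun j _ => norm_nonneg (f j)) (mem_range.mpr (Nat.mod_lt n hℓ))
  have hsummable : Summable fun n => f n * z ^ n := by
    refine .of_norm_bounded ((summable_geometric_of_lt_one (norm_nonneg z) hz).mul_left
      (∑ j ∈ range ℓ, ‖f j‖)) fun n => ?_
    rw [norm_mul, norm_pow]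
    exact mul_le_mul_of_nonneg_right (hbound n) (pow_nonneg (norm_nonneg z) n)
  have hshift : ∑' n, f (n + ℓ) * z ^ (n + ℓ) = z ^ ℓ * ∑' n, f n * z ^ n := by
    rw [← tsum_mul_left]
    congr 1 with n
    rw [hf n, pow_add]
    ring
  have hzℓ : 1 - z ^ ℓ ≠ 0 := sub_ne_zero.mpr (pow_ne_one_of_norm_lt_one hz hℓ.ne').symm
  have hsplit := hsummable.sum_add_tsum_nat_add ℓ
  rw [hshift] at hsplit
  convert hsummable.hasSum using 1
  rw [div_eq_iff hzℓ]
  linear_combination hsplit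

lemma hasSum_periodDigit_mul_pow {β : ℝ} {ℓ : ℕ} (hℓ : 0 < ℓ) {z : ℂ} (hz : ‖z‖ < 1)
    (h : z ^ ℓ = ∑ n ∈ range ℓ, (renyi β n : ℂ) * z ^ (ℓ - 1 - n)) :
    HasSum (fun n => (periodDigit β ℓ n : ℂ) * z ^ n) (-1) := by
  have hsum := hasSum_periodic_mul_pow (f := fun n => (periodDigit β ℓ n : ℂ))
    (fun n => congrArg Int.cast (periodDigit_periodic β ℓ n)) hℓ hz
  rwa [sum_range_periodDigit_mul_pow hℓ h, ← neg_sub, neg_div,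
    div_self (sub_ne_zero.mpr (pow_ne_one_of_norm_lt_one hz hℓ.ne').symm)] at hsum

lemma ne_zero_of_pow_eq_sum {A : Type*} [CommSemiring A] {z : A} {ℓ : ℕ} (hℓ : 0 < ℓ)
    {a : ℕ → A} (hlast : a (ℓ - 1) ≠ 0) (h : z ^ ℓ = ∑ n ∈ range ℓ, a n * z ^ (ℓ - 1 - n)) :
    z ≠ 0 := by
  rintro rfl
  rw [zero_pow hℓ.ne', sum_eq_single_of_mem (ℓ - 1) (mem_range.mpr (Nat.sub_one_lt hℓ.ne'))
    fun n hn hne => by rw [zero_pow (by have := mem_range.mp hn; omega), mul_zero]] at h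
  rw [Nat.sub_self, pow_zero, mul_one] at h
  exact hlast h.symm

lemma hasSum_ite_lt {M : Type*} [AddCommMonoid M] [TopologicalSpace M] (f : ℕ → M) (K : ℕ) :
    HasSum (fun n => if n < K then f n else 0) (∑ n ∈ range K, f n) := by
  have hsum : HasSum (fun n => if n < K then f n else 0)
      (∑ n ∈ range K, if n < K then f n else 0) :=
    hasSum_sum_of_ne_finset_zero fun n hn => if_neg (mt mem_range.mpr hn)
  rwa [sum_congr rfl fun n hn => if_pos (mem_range.mp hn)] at hsum

noncomputable def conjDigit (β : ℝ) (ℓ p : ℕ) (d : ℕ → ℤ) : ℤ → ℤ :=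
  Int.rec (periodDigit β ℓ) fun m => (if m < ℓ then renyi β m else 0) - if m < p then d m else 0

lemma conjDigit_natCast (β : ℝ) (ℓ p : ℕ) (d : ℕ → ℤ) (n : ℕ) :
    conjDigit β ℓ p d n = periodDigit β ℓ n :=
  rfl

lemma conjDigit_eq_zero_of_lt (β : ℝ) (ℓ p : ℕ) (d : ℕ → ℤ) {i : ℤ}
    (hi : i < -(max ℓ p : ℕ)) : conjDigit β ℓ p d i = 0 := by
  cases i with
  | ofNat n => rw [Int.ofNat_eq_natCast] at hi; omega
  | negSucc m =>
    rw [Int.negSucc_eq] at hi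
    simp only [conjDigit, if_neg (show ¬m < ℓ by omega), if_neg (show ¬m < p by omega),
      sub_zero]

lemma hasSum_conjDigit_mul_zpow {β : ℝ} {ℓ : ℕ} (hℓ : 0 < ℓ) {z : ℂ} (hz : ‖z‖ < 1)
    (hz0 : z ≠ 0) (h : z ^ ℓ = ∑ n ∈ range ℓ, (renyi β n : ℂ) * z ^ (ℓ - 1 - n))
    (p : ℕ) (d : ℕ → ℤ) :
    HasSum (fun i : ℤ => (conjDigit β ℓ p d i : ℂ) * z ^ i)
      (-∑ i ∈ range p, (d i : ℂ) * z ^ (-(i + 1 : ℤ))) := by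
  have hintegral : HasSum (fun n : ℕ => (periodDigit β ℓ n : ℂ) * z ^ (n : ℤ)) (-1) := by
    simpa only [zpow_natCast] using hasSum_periodDigit_mul_pow hℓ hz h
  have hfrac := (hasSum_ite_lt (fun m => (renyi β m : ℂ) * z ^ (-(m + 1 : ℤ))) ℓ).sub
    (hasSum_ite_lt (fun m => (d m : ℂ) * z ^ (-(m + 1 : ℤ))) p)
  rw [sum_mul_zpow_neg_succ_eq_one hz0 _ h] at hfrac
  convert hintegral.int_rec hfrac using 1
  · ext (n | m)
    · rfl
    · simp only [conjDigit, Int.negSucc_eq]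
      split_ifs <;> push_cast <;> ring
  · ring

lemma zpow_mem_closure_self_inv {K : Type*} [DivisionRing K] (z : K) (k : ℤ) :
    z ^ k ∈ Subring.closure {z, z⁻¹} := by
  cases k with
  | ofNat n =>
    rw [Int.ofNat_eq_natCast, zpow_natCast]
    exact pow_mem (Subring.subset_closure (by simp)) n
  | negSucc n =>
    rw [zpow_negSucc, ← inv_pow]
    exact pow_mem (Subring.subset_closure (by simp)) (n + 1)

theorem finite_expansion_conjugate_eventually_periodic_general (β : ℝ) (α : ℂ)
    (hβ : IsPisot β)
    (hroot : Polynomial.aeval α (minpoly ℤ β) = 0) (hne : α ≠ (β : ℂ))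
    (ℓ : ℕ) (hℓ : 0 < ℓ)
    (hlast : renyi β (ℓ - 1) ≠ 0) (hfin : ∀ n, ℓ ≤ n → renyi β n = 0)
    (p : ℕ) (d : ℕ → ℤ) :
    ∃ (N : ℤ) (u : ℤ → ℤ),
      (∃ k : ℤ, ∀ i, i < k → u i = 0) ∧
      (∀ i : ℤ, N ≤ i → u i = periodDigit β ℓ (i - N).toNat) ∧
      HasSum (fun i : ℤ => (u i : ℂ) * α ^ i)
        (-(∑ i ∈ Finset.range p, (d i : ℂ) * α ^ (-(i + 1 : ℤ)))) ∧
      (-(∑ i ∈ Finset.range p, (d i : ℂ) * α ^ (-(i + 1 : ℤ))) -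
          α ^ N * ∑' n : ℕ, (periodDigit β ℓ n : ℂ) * α ^ n) ∈
        Subring.closure ({α, α⁻¹} : Set ℂ) := by
  obtain ⟨hβ1, hβint, hconj⟩ := hβ
  have hrel : α ^ ℓ = ∑ n ∈ range ℓ, (renyi β n : ℂ) * α ^ (ℓ - 1 - n) := by
    have hβroot : aeval β (renyiPoly β ℓ) = 0 := by
      rw [aeval_renyiPoly, sub_eq_zero]
      exact pow_eq_sum_renyi hβ1 hℓ hfin
    have hαroot := aeval_eq_zero_of_aeval_minpoly_eq_zero hβint hroot hβroot
    rwa [aeval_renyiPoly, sub_eq_zero] at hαroot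
  have hα : ‖α‖ < 1 := hconj α hroot hne
  have hα0 : α ≠ 0 := ne_zero_of_pow_eq_sum hℓ (Int.cast_ne_zero.mpr hlast) hrel
  refine ⟨0, conjDigit β ℓ p d, ⟨_, fun i => conjDigit_eq_zero_of_lt β ℓ p d⟩,
    fun i hi => ?_, hasSum_conjDigit_mul_zpow hℓ hα hα0 hrel p d, ?_⟩
  · lift i to ℕ using hi
    exact conjDigit_natCast β ℓ p d i
  · rw [(hasSum_periodDigit_mul_pow hℓ hα hrel).tsum_eq, zpow_zero, one_mul, sub_neg_eq_add,
      neg_add_eq_sub]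
    refine Subring.sub_mem _ (Subring.one_mem _) (Subring.sum_mem _ fun i _ => ?_)
    exact Subring.mul_mem _ (intCast_mem _ _) (zpow_mem_closure_self_inv α _)

/-- Let β be a Pisot number with finite Rényi expansion
d_β(1) = t₁⋯t_ℓ and α a conjugate of β.  If x ∈ (0,1) has a finite β-expansion
0•x₋₁⋯x₋ₚ (greedy digits d with d n = 0 for n ≥ p), then the conjugate
-x' = -Σ_{i=1}^p d_{i-1} α^{-i} has an eventually periodic α-adic representation
over ℤ of the form ^ω(t₁⋯t_{ℓ-1}(t_ℓ-1)) u_n⋯u₀ • u₋₁⋯u₋ₘ; equivalently, -x'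
differs from α^N times the α-value of ^ω(t₁⋯t_{ℓ-1}(t_ℓ-1)) by an element of
ℤ[α, α⁻¹]. -/
theorem finite_expansion_conjugate_eventually_periodic (β : ℝ) (α : ℂ)
    (hβ : IsPisot β)
    (hroot : Polynomial.aeval α (minpoly ℤ β) = 0) (hne : α ≠ (β : ℂ))
    (ℓ : ℕ) (hℓ : 0 < ℓ)
    (hlast : renyi β (ℓ - 1) ≠ 0) (hfin : ∀ n, ℓ ≤ n → renyi β n = 0)
    (x : ℝ) (hx : x ∈ Set.Ioo (0 : ℝ) 1)
    (p : ℕ) (hp : 0 < p) (d : ℕ → ℤ)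
    (hgreedy : ∀ n, d n = ⌊β * (betaMap β)^[n] x⌋)
    (hdfin : ∀ n, p ≤ n → d n = 0) :
    ∃ (N : ℤ) (u : ℤ → ℤ),
      (∃ k : ℤ, ∀ i, i < k → u i = 0) ∧
      (∀ i : ℤ, N ≤ i → u i = periodDigit β ℓ (i - N).toNat) ∧
      HasSum (fun i : ℤ => (u i : ℂ) * α ^ i)
        (-(∑ i ∈ Finset.range p, (d i : ℂ) * α ^ (-(i + 1 : ℤ)))) ∧
      (-(∑ i ∈ Finset.range p, (d i : ℂ) * α ^ (-(i + 1 : ℤ))) -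
          α ^ N * ∑' n : ℕ, (periodDigit β ℓ n : ℂ) * α ^ n) ∈
        Subring.closure ({α, α⁻¹} : Set ℂ) :=
  finite_expansion_conjugate_eventually_periodic_general β α hβ hroot hne ℓ hℓ hlast hfin p d
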